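/- arXiv:2409.12371 — 5 statements merged into one kernel-verified Lean document; each statement's English description precedes it below -/
import Mathlib

section
/- Let C : ℕ → ℝ satisfy C_n ≥ 0 for all n ≥ 1, let a > b > 0 and 0 < s < t be reals, and suppose the series R(x) = Σ_{n=1}^∞ C_n x^{n−1} converges absolutely at x = s/a, s/b, t/a, and t/b. Then a·(s·R(s/b) − t·R(t/b)) + b·(t·R(t/a) − s·R(s/a)) ≤ 0. -/
/-!
Expanding `R` termwise, the `n`-th term of the left-hand side is
`C (n + 1) * (s ^ (n + 1) - t ^ (n + 1)) * (a ^ (n + 1) - b ^ (n + 1)) / (a * b) ^ n`,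
a product of a nonnegative coefficient with two factors of opposite signs.
-/

lemma combination_mul_div_pow_eq {a b s t : ℝ} (c : ℝ) (n : ℕ) (ha : a ≠ 0) (hb : b ≠ 0) :
    a * (s * (c * (s / b) ^ n) - t * (c * (t / b) ^ n))
        + b * (t * (c * (t / a) ^ n) - s * (c * (s / a) ^ n))
      = c * ((s ^ (n + 1) - t ^ (n + 1)) * (a ^ (n + 1) - b ^ (n + 1))) / (a * b) ^ n := by
  simp only [div_pow]
  field_simp
  ring

lemma combination_mul_div_pow_nonpos {a b s t c : ℝ} (n : ℕ) (hc : 0 ≤ c) (hb : 0 < b)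
    (hba : b ≤ a) (hs : 0 ≤ s) (hst : s ≤ t) :
    a * (s * (c * (s / b) ^ n) - t * (c * (t / b) ^ n))
        + b * (t * (c * (t / a) ^ n) - s * (c * (s / a) ^ n)) ≤ 0 := by
  have ha : 0 < a := hb.trans_le hba
  rw [combination_mul_div_pow_eq c n ha.ne' hb.ne']
  have hst' : s ^ (n + 1) - t ^ (n + 1) ≤ 0 := sub_nonpos.mpr (pow_le_pow_left₀ hs hst _)
  have hab' : 0 ≤ a ^ (n + 1) - b ^ (n + 1) := sub_nonneg.mpr (pow_le_pow_left₀ hb.le hba _)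
  exact div_nonpos_of_nonpos_of_nonneg
    (mul_nonpos_of_nonneg_of_nonpos hc (mul_nonpos_of_nonpos_of_nonneg hst' hab')) (by positivity)

/-- The claim `F_{j,1} ≤ 0` from the proof of Theorem 1.
`R x = Σ_{n=1}^∞ C_n x^{n-1}` is a power series with nonnegative coefficients
(the R-transform of the limiting spectral measure), absolutely convergent at
`s/a`, `s/b`, `t/a`, `t/b`, where `a > b > 0` and `0 < s < t`.  Then
`a (s R(s/b) - t R(t/b)) + b (t R(t/a) - s R(s/a)) ≤ 0`. -/
theorem Fj1_nonpos
    (C : ℕ → ℝ) (a b s t : ℝ)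
    (hC : ∀ n : ℕ, 1 ≤ n → 0 ≤ C n)
    (hba : b < a) (hb : 0 < b) (hs : 0 < s) (hst : s < t)
    (R : ℝ → ℝ) (hR : ∀ x : ℝ, R x = ∑' n : ℕ, C (n + 1) * x ^ n)
    (hsa : Summable fun n : ℕ => |C (n + 1) * (s / a) ^ n|)
    (hsb : Summable fun n : ℕ => |C (n + 1) * (s / b) ^ n|)
    (hta : Summable fun n : ℕ => |C (n + 1) * (t / a) ^ n|)
    (htb : Summable fun n : ℕ => |C (n + 1) * (t / b) ^ n|) :
    a * (s * R (s / b) - t * R (t / b)) + b * (t * R (t / a) - s * R (s / a)) ≤ 0 := by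
  have hasSum_R {x : ℝ} (hx : Summable fun n : ℕ => |C (n + 1) * x ^ n|) :
      HasSum (fun n : ℕ => C (n + 1) * x ^ n) (R x) :=
    hR x ▸ (summable_abs_iff.mp hx).hasSum
  have hasSum_lhs :=
    ((((hasSum_R hsb).mul_left s).sub ((hasSum_R htb).mul_left t)).mul_left a).add
      ((((hasSum_R hta).mul_left t).sub ((hasSum_R hsa).mul_left s)).mul_left b)
  exact hasSum_lhs.nonpos fun n =>
    combination_mul_div_pow_nonpos n (hC (n + 1) n.succ_pos) hb hba.le hs.le hst.le
end

section
/- Let c : ℕ → ℝ satisfy c_k ≥ 0 for all k ≥ 1, let 0 < s < t and 0 < b < a be reals, and let m ≥ 1 be an integer. Then T(2m) := Σ_{k=1}^{2m} c_k·c_{2m+1−k}·[(s/b)^{k−1}(t/a)^{2m−k} − (t/b)^{k−1}(s/a)^{2m−k}] ≤ 0. -/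
open Finset

lemma core_div (x y u v : ℝ) (hu : 0 < u) (hv : 0 < v) (hxy : x ≤ y) (huv : u ≤ v) :
    y / v + x / u ≤ x / v + y / u := by
  rw [div_add_div _ _ hv.ne' hu.ne', div_add_div _ _ hv.ne' hu.ne',
    div_le_div_iff₀ (by positivity) (by positivity)]
  nlinarith [mul_nonneg (mul_nonneg (sub_nonneg.2 hxy) (sub_nonneg.2 huv)) (mul_pos hv hu).le]

lemma bracket_le_aux (s t a b : ℝ) (hs : 0 < s) (hst : s < t) (hb : 0 < b) (hba : b < a)
    (p q : ℕ) (hpq : p ≤ q) :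
    (s/b)^p * (t/a)^q + (s/b)^q * (t/a)^p ≤ (t/b)^p * (s/a)^q + (t/b)^q * (s/a)^p := by
  obtain ⟨d, rfl⟩ := Nat.exists_eq_add_of_le hpq
  have ha : 0 < a := hb.trans hba
  have ht : 0 < t := hs.trans hst
  have hcore : (t/a)^d + (s/b)^d ≤ (s/a)^d + (t/b)^d := by
    rw [div_pow, div_pow, div_pow, div_pow]
    exact core_div (s^d) (t^d) (b^d) (a^d) (by positivity) (by positivity)
      (pow_le_pow_left₀ hs.le hst.le d) (pow_le_pow_left₀ hb.le hba.le d)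
  have h1 : (s/b)^p * (t/a)^(p+d) + (s/b)^(p+d) * (t/a)^p
      = ((s/b)^p * (t/a)^p) * ((t/a)^d + (s/b)^d) := by rw [pow_add, pow_add]; ring
  have h2 : (t/b)^p * (s/a)^(p+d) + (t/b)^(p+d) * (s/a)^p
      = ((t/b)^p * (s/a)^p) * ((s/a)^d + (t/b)^d) := by rw [pow_add, pow_add]; ring
  have hP : (s/b)^p * (t/a)^p = (t/b)^p * (s/a)^p := by
    rw [← mul_pow, ← mul_pow]; ring_nf
  rw [h1, h2, hP]
  exact mul_le_mul_of_nonneg_left hcore (by positivity)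

lemma bracket_le (s t a b : ℝ) (hs : 0 < s) (hst : s < t) (hb : 0 < b) (hba : b < a)
    (p q : ℕ) :
    (s/b)^p * (t/a)^q + (s/b)^q * (t/a)^p ≤ (t/b)^p * (s/a)^q + (t/b)^q * (s/a)^p := by
  rcases le_total p q with h | h
  · exact bracket_le_aux s t a b hs hst hb hba p q h
  · have := bracket_le_aux s t a b hs hst hb hba q p h
    linarith

/-- The even-index Cauchy-product term of `F_{j,2}` is nonpositive (proof of Theorem 1):
for nonnegative `c`, reals `0 < s < t` and `0 < b < a`, and an integer `m ≥ 1`,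
`T(2m) = Σ_{k=1}^{2m} c_k c_{2m+1-k} [(s/b)^{k-1}(t/a)^{2m-k} - (t/b)^{k-1}(s/a)^{2m-k}] ≤ 0`. -/
theorem T_even_nonpos
    (c : ℕ → ℝ) (s t a b : ℝ) (m : ℕ)
    (hc : ∀ k : ℕ, 1 ≤ k → 0 ≤ c k)
    (hs : 0 < s) (hst : s < t) (hb : 0 < b) (hba : b < a) (hm : 1 ≤ m) :
    ∑ k ∈ Finset.Icc 1 (2 * m), c k * c (2 * m + 1 - k) *
        ((s / b) ^ (k - 1) * (t / a) ^ (2 * m - k) -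
          (t / b) ^ (k - 1) * (s / a) ^ (2 * m - k)) ≤ 0 := by
  set n := 2 * m with hn
  have hn1 : 1 ≤ n := by omega
  set f : ℕ → ℝ := fun k => c k * c (n + 1 - k) *
      ((s/b)^(k-1) * (t/a)^(n-k) - (t/b)^(k-1) * (s/a)^(n-k)) with hf
  have hIcc : ∑ k ∈ Finset.Icc 1 n, f k = ∑ j ∈ Finset.range n, f (1 + j) := by
    rw [show Finset.Icc 1 n = Finset.Ico 1 (n+1) by rfl, Finset.sum_Ico_eq_sum_range]
    simp
  have hrev : ∑ j ∈ Finset.range n, f (1 + j) = ∑ j ∈ Finset.range n, f (n - j) := by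
    rw [← Finset.sum_range_reflect (fun j => f (1 + j)) n]
    refine Finset.sum_congr rfl fun j hj => ?_
    have hj' : j < n := Finset.mem_range.mp hj
    congr 1
    omega
  have hpair : ∀ j ∈ Finset.range n, f (1 + j) + f (n - j) ≤ 0 := by
    intro j hj
    have hj' : j < n := Finset.mem_range.mp hj
    have hC : 0 ≤ c (1 + j) * c (n - j) :=
      mul_nonneg (hc _ (by omega)) (hc _ (by omega))
    have hB := bracket_le s t a b hs hst hb hba j (n - (1 + j))
    have e1 : 1 + j - 1 = j := by omega
    have e2 : n + 1 - (1 + j) = n - j := by omega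
    have e3 : n - j - 1 = n - (1 + j) := by omega
    have e4 : n + 1 - (n - j) = 1 + j := by omega
    have e5 : n - (n - j) = j := by omega
    simp only [hf, e1, e2, e3, e4, e5]
    nlinarith [mul_nonpos_of_nonneg_of_nonpos hC (by linarith :
      ((s/b)^j * (t/a)^(n-(1+j)) - (t/b)^j * (s/a)^(n-(1+j))) +
      ((s/b)^(n-(1+j)) * (t/a)^j - (t/b)^(n-(1+j)) * (s/a)^j) ≤ 0)]
  have h2S : ∑ j ∈ Finset.range n, f (1 + j) + ∑ j ∈ Finset.range n, f (n - j) ≤ 0 := by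
    rw [← Finset.sum_add_distrib]
    exact Finset.sum_nonpos hpair
  have : ∑ k ∈ Finset.Icc 1 n, f k ≤ 0 := by
    rw [hIcc]; linarith [hrev ▸ h2S]
  simpa [hf] using this
end

section
/- Let c : ℕ → ℝ satisfy c_k ≥ 0 for all k ≥ 1, let 0 < s < t and 0 < b < a be reals, and let m ≥ 1 be an integer. Then the (m+1)-th summand of the sum below vanishes, namely (s/b)^m(t/a)^m − (t/b)^m(s/a)^m = 0, and T(2m+1) := Σ_{k=1}^{2m+1} c_k·c_{2m+2−k}·[(s/b)^{k−1}(t/a)^{2m+1−k} − (t/b)^{k−1}(s/a)^{2m+1−k}] ≤ 0. -/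
open Finset

/-- power-sum inequality: with equal products and `u` the max, power sums compare. -/
lemma pow_sum_aux {x y u v : ℝ} (hx : 0 < x) (hy : 0 < y) (hu : 0 < u) (hv : 0 < v)
    (hxu : x ≤ u) (hyu : y ≤ u) (hxyuv : x * y = u * v) (d : ℕ) :
    x ^ d + y ^ d ≤ u ^ d + v ^ d := by
  have hXU : x ^ d ≤ u ^ d := pow_le_pow_left₀ hx.le hxu d
  have hYU : y ^ d ≤ u ^ d := pow_le_pow_left₀ hy.le hyu d
  have hU : 0 < u ^ d := pow_pos hu d
  have hXY : x ^ d * y ^ d = u ^ d * v ^ d := by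
    rw [← mul_pow, ← mul_pow, hxyuv]
  nlinarith [mul_nonneg (sub_nonneg.2 hXU) (sub_nonneg.2 hYU)]

lemma pow_pair_le_of_le {x y u v : ℝ} (hx : 0 < x) (hy : 0 < y) (hu : 0 < u) (hv : 0 < v)
    (hxu : x ≤ u) (hyu : y ≤ u) (hxyuv : x * y = u * v) {i j : ℕ} (hij : i ≤ j) :
    x ^ i * y ^ j + x ^ j * y ^ i ≤ u ^ i * v ^ j + u ^ j * v ^ i := by
  obtain ⟨d, rfl⟩ := Nat.exists_eq_add_of_le hij
  have h1 : x ^ i * y ^ (i + d) + x ^ (i + d) * y ^ i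
      = (x * y) ^ i * (y ^ d + x ^ d) := by ring
  have h2 : u ^ i * v ^ (i + d) + u ^ (i + d) * v ^ i
      = (u * v) ^ i * (v ^ d + u ^ d) := by ring
  rw [h1, h2, hxyuv]
  apply mul_le_mul_of_nonneg_left _ (pow_nonneg (mul_pos hu hv).le i)
  have := pow_sum_aux hx hy hu hv hxu hyu hxyuv d
  linarith

lemma pow_pair_le {x y u v : ℝ} (hx : 0 < x) (hy : 0 < y) (hu : 0 < u) (hv : 0 < v)
    (hxu : x ≤ u) (hyu : y ≤ u) (hxyuv : x * y = u * v) (i j : ℕ) :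
    x ^ i * y ^ j + x ^ j * y ^ i ≤ u ^ i * v ^ j + u ^ j * v ^ i := by
  rcases le_total i j with h | h
  · exact pow_pair_le_of_le hx hy hu hv hxu hyu hxyuv h
  · have := pow_pair_le_of_le hx hy hu hv hxu hyu hxyuv h
    linarith

/-- The odd-index Cauchy-product term of `F_{j,2}` is nonpositive (proof of Theorem 1):
for nonnegative `c`, reals `0 < s < t` and `0 < b < a`, and an integer `m ≥ 1`,
the middle (`(m+1)`-th) summand vanishes, i.e.
`(s/b)^m (t/a)^m - (t/b)^m (s/a)^m = 0`, and
`T(2m+1) = Σ_{k=1}^{2m+1} c_k c_{2m+2-k}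
   [(s/b)^{k-1}(t/a)^{2m+1-k} - (t/b)^{k-1}(s/a)^{2m+1-k}] ≤ 0`. -/
theorem T_odd_nonpos
    (c : ℕ → ℝ) (s t a b : ℝ) (m : ℕ)
    (hc : ∀ k : ℕ, 1 ≤ k → 0 ≤ c k)
    (hs : 0 < s) (hst : s < t) (hb : 0 < b) (hba : b < a) (hm : 1 ≤ m) :
    ((s / b) ^ m * (t / a) ^ m - (t / b) ^ m * (s / a) ^ m = 0) ∧
    ∑ k ∈ Finset.Icc 1 (2 * m + 1), c k * c (2 * m + 2 - k) *
        ((s / b) ^ (k - 1) * (t / a) ^ (2 * m + 1 - k) -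
          (t / b) ^ (k - 1) * (s / a) ^ (2 * m + 1 - k)) ≤ 0 := by
  have ha : 0 < a := hb.trans hba
  have ht : 0 < t := hs.trans hst
  set x := s / b with hxdef
  set y := t / a with hydef
  set u := t / b with hudef
  set v := s / a with hvdef
  have hx : 0 < x := div_pos hs hb
  have hy : 0 < y := div_pos ht ha
  have hu : 0 < u := div_pos ht hb
  have hv : 0 < v := div_pos hs ha
  have hxu : x ≤ u := by
    have h : s ≤ t := hst.le
    rw [hxdef, hudef]; gcongr
  have hyu : y ≤ u := by
    have h : b ≤ a := hba.le
    have ht' : (0:ℝ) ≤ t := ht.le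
    rw [hydef, hudef]; gcongr
  have hxyuv : x * y = u * v := by
    field_simp [hxdef, hydef, hudef, hvdef]
    ring
  constructor
  · rw [← mul_pow, ← mul_pow, hxyuv]
    ring
  · set f : ℕ → ℝ := fun k => c k * c (2 * m + 2 - k) *
      (x ^ (k - 1) * y ^ (2 * m + 1 - k) - u ^ (k - 1) * v ^ (2 * m + 1 - k)) with hf
    have hrefl : ∑ k ∈ Finset.Icc 1 (2 * m + 1), f k
        = ∑ k ∈ Finset.Icc 1 (2 * m + 1), f (2 * m + 2 - k) := by
      apply Finset.sum_nbij' (fun k => 2 * m + 2 - k) (fun k => 2 * m + 2 - k)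
      · intro k hk; simp only [Finset.mem_Icc] at *; omega
      · intro k hk; simp only [Finset.mem_Icc] at *; omega
      · intro k hk; simp only [Finset.mem_Icc] at hk; omega
      · intro k hk; simp only [Finset.mem_Icc] at hk; omega
      · intro k hk; simp only [Finset.mem_Icc] at hk
        congr 1
        omega
    have key : ∀ k ∈ Finset.Icc 1 (2 * m + 1), f k + f (2 * m + 2 - k) ≤ 0 := by
      intro k hk
      simp only [Finset.mem_Icc] at hk
      have h1 : 2 * m + 2 - (2 * m + 2 - k) = k := by omega
      have h2 : (2 * m + 2 - k) - 1 = 2 * m + 1 - k := by omega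
      have h3 : 2 * m + 1 - (2 * m + 2 - k) = k - 1 := by omega
      have hck : 0 ≤ c k := hc k hk.1
      have hck' : 0 ≤ c (2 * m + 2 - k) := hc _ (by omega)
      rw [hf]
      simp only [h1, h2, h3]
      have hB := pow_pair_le hx hy hu hv hxu hyu hxyuv (k - 1) (2 * m + 1 - k)
      nlinarith [mul_nonneg hck hck']
    have h2S : 2 * ∑ k ∈ Finset.Icc 1 (2 * m + 1), f k
        = ∑ k ∈ Finset.Icc 1 (2 * m + 1), (f k + f (2 * m + 2 - k)) := by
      rw [Finset.sum_add_distrib, ← hrefl]; ring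
    have hsum := Finset.sum_nonpos key
    linarith [h2S ▸ hsum]
end

section
/- Let C : ℕ → ℝ satisfy C_n ≥ 0 for all n ≥ 1, let 0 < s < t and 0 < b < a be reals, and suppose the series R(x) = Σ_{n=1}^∞ C_n x^{n−1} converges absolutely at x = s/a, s/b, t/a, and t/b. Then R(s/b)·R(t/a) ≤ R(t/b)·R(s/a). -/
/-!
Expanding both products as double series, `R(x) R(y) = ∑_{m,n} c_m c_n x^m y^n`, and pairing the
terms `(m, n)` and `(n, m)`, it suffices to show `x^m y^n + x^n y^m ≤ X^m Y^n + X^n Y^m` for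
`x = s/b`, `y = t/a`, `X = t/b`, `Y = s/a`. These satisfy `x y = X Y` and `Y ≤ x ≤ X`; for `n ≤ m`
both sides factor as `(x y)^n (x^k + y^k)` resp. `(X Y)^n (X^k + Y^k)` with `k = m - n`, and
among pairs of positive numbers with a fixed product the sum grows with the spread.
-/

lemma add_le_add_of_mul_eq_mul {u v U V : ℝ} (hV : 0 < V) (hVu : V ≤ u) (huU : u ≤ U)
    (h : u * v = U * V) : u + v ≤ U + V := by
  have hu : 0 < u := hV.trans_le hVu
  have key : u * (U + V - (u + v)) = (U - u) * (u - V) := by linear_combination -h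
  have : 0 ≤ u * (U + V - (u + v)) := key ▸ mul_nonneg (sub_nonneg.2 huU) (sub_nonneg.2 hVu)
  linarith [(mul_nonneg_iff_of_pos_left hu).1 this]

lemma pow_mul_pow_add_pow_mul_pow_le {x y X Y : ℝ} (hY : 0 < Y) (hYx : Y ≤ x) (hxX : x ≤ X)
    (hxy : x * y = X * Y) (m n : ℕ) :
    x ^ m * y ^ n + x ^ n * y ^ m ≤ X ^ m * Y ^ n + X ^ n * Y ^ m := by
  wlog hnm : n ≤ m generalizing m n
  · linarith [this n m (le_of_not_ge hnm)]
  obtain ⟨k, rfl⟩ := Nat.exists_eq_add_of_le hnm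
  have hx : 0 ≤ x := hY.le.trans hYx
  have hsum : x ^ k + y ^ k ≤ X ^ k + Y ^ k :=
    add_le_add_of_mul_eq_mul (pow_pos hY k) (pow_le_pow_left₀ hY.le hYx k)
      (pow_le_pow_left₀ hx hxX k) (by rw [← mul_pow, ← mul_pow, hxy])
  calc x ^ (n + k) * y ^ n + x ^ n * y ^ (n + k) = (x * y) ^ n * (x ^ k + y ^ k) := by ring
    _ ≤ (X * Y) ^ n * (X ^ k + Y ^ k) := by
      rw [hxy]; exact mul_le_mul_of_nonneg_left hsum (pow_nonneg (by nlinarith) n)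
    _ = X ^ (n + k) * Y ^ n + X ^ n * Y ^ (n + k) := by ring

lemma two_mul_tsum_mul_tsum {ι : Type*} {f g : ι → ℝ} (hf : Summable fun i => ‖f i‖)
    (hg : Summable fun i => ‖g i‖) :
    2 * ((∑' i, f i) * ∑' i, g i) = ∑' p : ι × ι, (f p.1 * g p.2 + f p.2 * g p.1) := by
  have hfg := summable_mul_of_summable_norm hf hg
  have hfg' : Summable fun p : ι × ι => f p.2 * g p.1 := (Equiv.prodComm ι ι).summable_iff.2 hfg
  have hswap : ∑' p : ι × ι, f p.2 * g p.1 = ∑' p : ι × ι, f p.1 * g p.2 :=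
    (Equiv.prodComm ι ι).tsum_eq fun p => f p.1 * g p.2
  rw [hfg.tsum_add hfg', hswap,
    tsum_mul_tsum_of_summable_norm hf hg]
  ring

lemma tsum_mul_tsum_le_of_add_swap_le {ι : Type*} {f g F G : ι → ℝ}
    (hf : Summable fun i => ‖f i‖) (hg : Summable fun i => ‖g i‖)
    (hF : Summable fun i => ‖F i‖) (hG : Summable fun i => ‖G i‖)
    (h : ∀ i j, f i * g j + f j * g i ≤ F i * G j + F j * G i) :
    (∑' i, f i) * (∑' i, g i) ≤ (∑' i, F i) * (∑' i, G i) := by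
  have hfg := summable_mul_of_summable_norm hf hg
  have hFG := summable_mul_of_summable_norm hF hG
  have := Summable.tsum_le_tsum (fun p : ι × ι => h p.1 p.2)
    (hfg.add ((Equiv.prodComm ι ι).summable_iff.2 hfg))
    (hFG.add ((Equiv.prodComm ι ι).summable_iff.2 hFG))
  rw [← two_mul_tsum_mul_tsum hf hg, ← two_mul_tsum_mul_tsum hF hG] at this
  linarith

lemma tsum_mul_pow_mul_tsum_mul_pow_le {c : ℕ → ℝ} (hc : ∀ n, 0 ≤ c n) {x y X Y : ℝ}
    (hx : Summable fun n => ‖c n * x ^ n‖) (hy : Summable fun n => ‖c n * y ^ n‖)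
    (hX : Summable fun n => ‖c n * X ^ n‖) (hY : Summable fun n => ‖c n * Y ^ n‖)
    (h : ∀ m n, x ^ m * y ^ n + x ^ n * y ^ m ≤ X ^ m * Y ^ n + X ^ n * Y ^ m) :
    (∑' n, c n * x ^ n) * (∑' n, c n * y ^ n) ≤ (∑' n, c n * X ^ n) * (∑' n, c n * Y ^ n) :=
  tsum_mul_tsum_le_of_add_swap_le hx hy hX hY fun m n => by
    have := mul_le_mul_of_nonneg_left (h m n) (mul_nonneg (hc m) (hc n))
    linear_combination this

/-- The claim `F_{j,2} ≤ 0` from the proof of Theorem 1: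
with `R x = Σ_{n=1}^∞ C_n x^{n-1}` a power series with nonnegative coefficients,
absolutely convergent at `s/a`, `s/b`, `t/a`, `t/b` (where `0 < s < t`, `0 < b < a`),
one has `R(s/b) R(t/a) ≤ R(t/b) R(s/a)`. -/
theorem Fj2_nonpos
    (C : ℕ → ℝ) (s t a b : ℝ)
    (hC : ∀ n : ℕ, 1 ≤ n → 0 ≤ C n)
    (hs : 0 < s) (hst : s < t) (hb : 0 < b) (hba : b < a)
    (R : ℝ → ℝ) (hR : ∀ x : ℝ, R x = ∑' n : ℕ, C (n + 1) * x ^ n)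
    (hsa : Summable fun n : ℕ => |C (n + 1) * (s / a) ^ n|)
    (hsb : Summable fun n : ℕ => |C (n + 1) * (s / b) ^ n|)
    (hta : Summable fun n : ℕ => |C (n + 1) * (t / a) ^ n|)
    (htb : Summable fun n : ℕ => |C (n + 1) * (t / b) ^ n|) :
    R (s / b) * R (t / a) ≤ R (t / b) * R (s / a) := by
  simp only [← Real.norm_eq_abs] at hsa hsb hta htb
  simp only [hR]
  refine tsum_mul_pow_mul_tsum_mul_pow_le (fun n => hC (n + 1) (Nat.le_add_left 1 n))
    hsb hta htb hsa (pow_mul_pow_add_pow_mul_pow_le (div_pos hs (hb.trans hba)) ?_ ?_ ?_)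
  · exact div_le_div_of_nonneg_left hs.le hb hba.le
  · exact div_le_div_of_nonneg_right hst.le hb.le
  · ring
end

section
/- Let C : ℕ → ℝ satisfy C_n ≥ 0 for all n ≥ 1, let 0 < s < t and 0 < b < a be reals, and suppose the series R(x) = Σ_{n=1}^∞ C_n x^{n−1} converges absolutely at x = s/a, s/b, t/a, and t/b. Then (b + t·R(t/b))·(a + s·R(s/a)) ≥ (b + s·R(s/b))·(a + t·R(t/a)). -/
/-!
Put `φ(y) = 1 + y R(y) = Σ eₙ yⁿ` with `e₀ = 1`, `eₙ = Cₙ ≥ 0`, so that `x + u R(u/x) = x φ(u/x)` and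
the claim becomes `φ(s/b) φ(t/a) ≤ φ(s/a) φ(t/b)`. With `p = s/a`, `q = a/b ≥ 1`, `r = t/s ≥ 1` this
reads `φ(pq) φ(pr) ≤ φ(p) φ(pqr)`, which is Chebyshev's sum inequality for the weights `eₙ pⁿ` and
the two increasing sequences `qⁿ`, `rⁿ`.
-/

open Finset Filter

section Chebyshev

variable {ι α : Type*} [CommRing α] [LinearOrder α] [IsStrictOrderedRing α] {w f g : ι → α}

theorem MonovaryOn.sum_mul_sum_le_sum_mul_sum {s : Finset ι} (hw : ∀ i ∈ s, 0 ≤ w i)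
    (hfg : MonovaryOn f g s) :
    (∑ i ∈ s, w i * f i) * (∑ i ∈ s, w i * g i) ≤ (∑ i ∈ s, w i) * ∑ i ∈ s, w i * (f i * g i) := by
  set X := (∑ i ∈ s, w i) * (∑ i ∈ s, w i * (f i * g i)) -
    (∑ i ∈ s, w i * f i) * (∑ i ∈ s, w i * g i)
  have hX : X = ∑ i ∈ s, ∑ j ∈ s, w i * w j * (g j * (f j - f i)) := by
    simp only [X, sum_mul_sum, ← sum_sub_distrib]
    exact sum_congr rfl fun i _ => sum_congr rfl fun j _ => by ring
  have hX' : X = ∑ i ∈ s, ∑ j ∈ s, w i * w j * (g i * (f i - f j)) := by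
    rw [hX, sum_comm]
    exact sum_congr rfl fun i _ => sum_congr rfl fun j _ => by ring
  have h2X : 2 * X = ∑ i ∈ s, ∑ j ∈ s, w i * w j * ((f j - f i) * (g j - g i)) := by
    rw [two_mul]
    nth_rw 1 [hX]
    rw [hX', ← sum_add_distrib]
    exact sum_congr rfl fun i _ => by rw [← sum_add_distrib]; exact sum_congr rfl fun j _ => by ring
  have : 0 ≤ 2 * X := h2X ▸ sum_nonneg fun i hi => sum_nonneg fun j hj =>
    mul_nonneg (mul_nonneg (hw i hi) (hw j hj)) (hfg.sub_mul_sub_nonneg hi hj)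
  linarith

variable [TopologicalSpace α] [OrderClosedTopology α] [ContinuousMul α]

theorem Monovary.hasSum_mul_le (hw : ∀ i, 0 ≤ w i) (hfg : Monovary f g) {A B C D : α}
    (hA : HasSum w A) (hB : HasSum (fun i => w i * f i) B) (hC : HasSum (fun i => w i * g i) C)
    (hD : HasSum (fun i => w i * (f i * g i)) D) :
    B * C ≤ A * D :=
  le_of_tendsto_of_tendsto' (Tendsto.mul hB hC) (Tendsto.mul hA hD) fun s =>
    (hfg.monovaryOn s).sum_mul_sum_le_sum_mul_sum fun i _ => hw i

end Chebyshev

theorem hasSum_coeff_mul_pow_mul_le {e : ℕ → ℝ} (he : ∀ n, 0 ≤ e n) {p q r A B C D : ℝ}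
    (hp : 0 ≤ p) (hq : 1 ≤ q) (hr : 1 ≤ r) (hA : HasSum (fun n => e n * p ^ n) A)
    (hB : HasSum (fun n => e n * (p * q) ^ n) B) (hC : HasSum (fun n => e n * (p * r) ^ n) C)
    (hD : HasSum (fun n => e n * (p * q * r) ^ n) D) :
    B * C ≤ A * D := by
  simp only [mul_pow, ← mul_assoc] at hB hC hD
  exact ((pow_right_mono₀ hq).monovary (pow_right_mono₀ hr)).hasSum_mul_le
    (fun n => mul_nonneg (he n) (pow_nonneg hp n)) hA hB hC (by simpa only [mul_assoc] using hD)

theorem hasSum_update_zero_one_mul_pow {c : ℕ → ℝ} {x S : ℝ}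
    (h : HasSum (fun n => c (n + 1) * x ^ n) S) :
    HasSum (fun n => Function.update c 0 1 n * x ^ n) (1 + x * S) := by
  rw [← hasSum_nat_add_iff' 1]
  simpa [mul_left_comm, pow_succ'] using h.mul_left x

/-- The combined numerator claim `g_M^{-1}(θ_j) g_N^{-1}(θ_1) - g_N^{-1}(θ_j) g_M^{-1}(θ_1) ≤ 0`
(i.e. `F_{j,1} + s t F_{j,2} ≤ 0`) from the proof of Theorem 1:
with `R x = Σ_{n=1}^∞ C_n x^{n-1}` a power series with nonnegative coefficients,
absolutely convergent at `s/a`, `s/b`, `t/a`, `t/b` (where `0 < s < t`, `0 < b < a`),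
`(b + t R(t/b)) (a + s R(s/a)) ≥ (b + s R(s/b)) (a + t R(t/a))`. -/
theorem outlier_numerator_ineq
    (C : ℕ → ℝ) (s t a b : ℝ)
    (hC : ∀ n : ℕ, 1 ≤ n → 0 ≤ C n)
    (hs : 0 < s) (hst : s < t) (hb : 0 < b) (hba : b < a)
    (R : ℝ → ℝ) (hR : ∀ x : ℝ, R x = ∑' n : ℕ, C (n + 1) * x ^ n)
    (hsa : Summable fun n : ℕ => |C (n + 1) * (s / a) ^ n|)
    (hsb : Summable fun n : ℕ => |C (n + 1) * (s / b) ^ n|)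
    (hta : Summable fun n : ℕ => |C (n + 1) * (t / a) ^ n|)
    (htb : Summable fun n : ℕ => |C (n + 1) * (t / b) ^ n|) :
    (b + s * R (s / b)) * (a + t * R (t / a)) ≤ (b + t * R (t / b)) * (a + s * R (s / a)) := by
  have ha : 0 < a := hb.trans hba
  have coeff_nonneg : ∀ n, 0 ≤ Function.update C 0 1 n
    | 0 => by simp
    | n + 1 => by simpa using hC (n + 1) n.succ_pos
  have series {x : ℝ} (h : Summable fun n : ℕ => |C (n + 1) * x ^ n|) :
      HasSum (fun n => Function.update C 0 1 n * x ^ n) (1 + x * R x) := by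
    rw [hR]
    exact hasSum_update_zero_one_mul_pow h.of_abs.hasSum
  have key := hasSum_coeff_mul_pow_mul_le (p := s / a) (q := a / b) (r := t / s) coeff_nonneg
    (by positivity) ((one_le_div hb).2 hba.le) ((one_le_div hs).2 hst.le) (series hsa)
    (by rw [div_mul_div_cancel₀ ha.ne']; exact series hsb)
    (by rw [mul_comm, div_mul_div_cancel₀ hs.ne']; exact series hta)
    (by rw [div_mul_div_cancel₀ ha.ne', mul_comm, div_mul_div_cancel₀ hs.ne']; exact series htb)
  have scale {x : ℝ} (hx : x ≠ 0) (u : ℝ) : x + u * R (u / x) = x * (1 + u / x * R (u / x)) := by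
    field_simp
  rw [scale hb.ne', scale ha.ne', scale hb.ne', scale ha.ne']
  linarith [mul_le_mul_of_nonneg_left key (mul_nonneg hb.le ha.le)]
end
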